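/- arXiv:2109.06962 — 4 statements merged into one kernel-verified Lean document; each statement's English description precedes it below -/
import Mathlib

section
/- Let K ⊆ ℝ³ be a body of constant width one. Then r(K) + R(K) = 1, and there exists a point a ∈ ℝ³ such that closedBall(a, r(K)) ⊆ K ⊆ closedBall(a, R(K)); that is, K has an inball which is concentric with its circumball. -/
open MeasureTheory Metric Filter
open scoped RealInnerProductSpace

/-!
Comparing the support function of `K` with that of a ball, the width condition
`H_K(u) + H_K(-u) = ‖u‖` turns an enclosing ball into an enclosed one and vice versa:
`K ⊆ B(a, s)` forces `B(a, 1 - s) ⊆ K` (otherwise a hyperplane separating a point of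
`B(a, 1 - s)` from `K` makes the width in its normal direction smaller than one), and
`B(b, r) ⊆ K` forces `K ⊆ B(b, 1 - r)`. A circumball `B(a, R)` exists by compactness; the first
fact puts `B(a, 1 - R)` inside `K`, and the second shows that no larger ball fits, since it would
give an enclosing ball of radius less than `R`.
-/

noncomputable section

/-- The support function of a set `K ⊆ ℝ³`. -/
def suppFn (K : Set (EuclideanSpace ℝ (Fin 3))) (u : EuclideanSpace ℝ (Fin 3)) : ℝ :=
  sSup ((fun x => ⟪x, u⟫) '' K)

/-- A body of constant width one in `ℝ³`: a nonempty compact convex set whose support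
function satisfies `H(u) + H(-u) = ‖u‖` for all `u`. -/
def IsBodyOfConstantWidthOne (K : Set (EuclideanSpace ℝ (Fin 3))) : Prop :=
  K.Nonempty ∧ IsCompact K ∧ Convex ℝ K ∧
    ∀ u : EuclideanSpace ℝ (Fin 3), suppFn K u + suppFn K (-u) = ‖u‖

/-- The inradius of `K ⊆ ℝ³`. -/
def inradius (K : Set (EuclideanSpace ℝ (Fin 3))) : ℝ :=
  sSup {r : ℝ | 0 ≤ r ∧ ∃ a : EuclideanSpace ℝ (Fin 3), closedBall a r ⊆ K}

/-- The circumradius of `K ⊆ ℝ³`. -/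
def circumradius (K : Set (EuclideanSpace ℝ (Fin 3))) : ℝ :=
  sInf {r : ℝ | 0 ≤ r ∧ ∃ a : EuclideanSpace ℝ (Fin 3), K ⊆ closedBall a r}

theorem exists_subset_closedBall_of_forall_lt {α : Type*} [PseudoMetricSpace α] [ProperSpace α]
    {K : Set α} (hK : K.Nonempty) {R : ℝ} (h : ∀ r > R, ∃ a, K ⊆ closedBall a r) :
    ∃ a, K ⊆ closedBall a R := by
  obtain ⟨x₀, hx₀⟩ := hK
  let centers : Set.Ioi R → Set α := fun r => ⋂ x ∈ K, closedBall x r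
  have hclosed : ∀ r, IsClosed (centers r) := fun r =>
    isClosed_biInter fun x _ => isClosed_closedBall
  have hcompact : ∀ r, IsCompact (centers r) := fun r =>
    (isCompact_closedBall x₀ r).of_isClosed_subset (hclosed r) (Set.biInter_subset_of_mem hx₀)
  have hnonempty : ∀ r, (centers r).Nonempty := fun r => by
    obtain ⟨a, ha⟩ := h r r.2
    exact ⟨a, Set.mem_iInter₂.2 fun x hx => mem_closedBall_comm.1 (ha hx)⟩
  have hdirected : Directed (· ⊇ ·) centers := Monotone.directed_ge fun r s hrs =>
    Set.iInter₂_mono fun x _ => closedBall_subset_closedBall hrs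
  have : Nonempty (Set.Ioi R) := ⟨⟨R + 1, by simp⟩⟩
  obtain ⟨a, ha⟩ := IsCompact.nonempty_iInter_of_directed_nonempty_isCompact_isClosed centers
    hdirected hnonempty hcompact hclosed
  refine ⟨a, fun x hx => mem_closedBall.2 (le_of_forall_gt_imp_ge_of_dense fun r hr => ?_)⟩
  exact mem_closedBall_comm.1 (Set.mem_iInter₂.1 (Set.mem_iInter.1 ha ⟨r, hr⟩) x hx)

theorem norm_le_of_forall_inner_le {E : Type*} [NormedAddCommGroup E] [InnerProductSpace ℝ E]
    [Nontrivial E] {v : E} {c : ℝ} (h : ∀ u, ⟪v, u⟫ ≤ c * ‖u‖) : ‖v‖ ≤ c := by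
  rcases eq_or_ne v 0 with rfl | hv
  · obtain ⟨u, hu⟩ := exists_ne (0 : E)
    simpa [norm_pos_iff.2 hu] using h u
  · have := h v
    rw [real_inner_self_eq_norm_mul_norm] at this
    exact le_of_mul_le_mul_right this (norm_pos_iff.2 hv)

theorem inner_le_of_mem_closedBall {E : Type*} [NormedAddCommGroup E] [InnerProductSpace ℝ E]
    {a x : E} {r : ℝ} (hx : x ∈ closedBall a r) (u : E) : ⟪x, u⟫ ≤ ⟪a, u⟫ + r * ‖u‖ := by
  have h := real_inner_le_norm (x - a) u
  rw [inner_sub_left] at h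
  nlinarith [mem_closedBall_iff_norm.1 hx, norm_nonneg u]

theorem exists_mem_closedBall_inner_eq {E : Type*} [NormedAddCommGroup E]
    [InnerProductSpace ℝ E] (b u : E) {r : ℝ} (hr : 0 ≤ r) :
    ∃ y ∈ closedBall b r, ⟪y, u⟫ = ⟪b, u⟫ + r * ‖u‖ := by
  refine ⟨b + (r * ‖u‖⁻¹) • u, ?_, ?_⟩
  · rw [mem_closedBall_iff_norm, add_sub_cancel_left, norm_smul, Real.norm_eq_abs,
      abs_of_nonneg (by positivity), mul_assoc]
    exact mul_le_of_le_one_right hr (inv_mul_le_one_of_le₀ le_rfl (norm_nonneg u))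
  · rw [inner_add_left, real_inner_smul_left, real_inner_self_eq_norm_mul_norm]
    rcases eq_or_ne u 0 with rfl | hu
    · simp
    · field_simp [norm_ne_zero_iff.2 hu]

section SupportFunction

variable {K : Set (EuclideanSpace ℝ (Fin 3))} {a u : EuclideanSpace ℝ (Fin 3)} {r : ℝ}

theorem IsCompact.inner_le_suppFn (hK : IsCompact K) {x : EuclideanSpace ℝ (Fin 3)}
    (hx : x ∈ K) (u : EuclideanSpace ℝ (Fin 3)) : ⟪x, u⟫ ≤ suppFn K u :=
  le_csSup (hK.image (continuous_id.inner continuous_const)).bddAbove ⟨x, hx, rfl⟩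

theorem suppFn_le_of_forall_inner_le (hne : K.Nonempty) {c : ℝ} (h : ∀ x ∈ K, ⟪x, u⟫ ≤ c) :
    suppFn K u ≤ c :=
  csSup_le (hne.image _) (Set.forall_mem_image.2 h)

theorem suppFn_le_of_subset_closedBall (hne : K.Nonempty) (h : K ⊆ closedBall a r) :
    suppFn K u ≤ ⟪a, u⟫ + r * ‖u‖ :=
  suppFn_le_of_forall_inner_le hne fun _ hx => inner_le_of_mem_closedBall (h hx) u

theorem IsCompact.le_suppFn_of_closedBall_subset (hK : IsCompact K) (hr : 0 ≤ r)
    (h : closedBall a r ⊆ K) : ⟪a, u⟫ + r * ‖u‖ ≤ suppFn K u := by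
  obtain ⟨y, hy, hyu⟩ := exists_mem_closedBall_inner_eq a u hr
  exact hyu ▸ hK.inner_le_suppFn (h hy) u

end SupportFunction

section Radii

variable {K : Set (EuclideanSpace ℝ (Fin 3))} {a : EuclideanSpace ℝ (Fin 3)} {r : ℝ}

theorem circumradius_le (hr : 0 ≤ r) (h : K ⊆ closedBall a r) : circumradius K ≤ r :=
  csInf_le ⟨0, fun _ hs => hs.1⟩ ⟨hr, a, h⟩

theorem exists_subset_closedBall_circumradius (hne : K.Nonempty) (hb : Bornology.IsBounded K) :
    ∃ a, K ⊆ closedBall a (circumradius K) := by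
  have ⟨x₀, hx₀⟩ := hne
  obtain ⟨c, hc⟩ := hb.subset_closedBall x₀
  have hradii : {r : ℝ | 0 ≤ r ∧ ∃ a, K ⊆ closedBall a r}.Nonempty :=
    ⟨max c 0, le_max_right c 0, x₀, hc.trans (closedBall_subset_closedBall (le_max_left c 0))⟩
  refine exists_subset_closedBall_of_forall_lt hne fun r hr => ?_
  obtain ⟨s, ⟨-, a, ha⟩, hsr⟩ := exists_lt_of_csInf_lt hradii hr
  exact ⟨a, ha.trans (closedBall_subset_closedBall hsr.le)⟩

end Radii

namespace IsBodyOfConstantWidthOne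

variable {K : Set (EuclideanSpace ℝ (Fin 3))} {a : EuclideanSpace ℝ (Fin 3)} {r : ℝ}

theorem nonempty (hK : IsBodyOfConstantWidthOne K) : K.Nonempty := hK.1

theorem isCompact (hK : IsBodyOfConstantWidthOne K) : IsCompact K := hK.2.1

theorem suppFn_add_suppFn_neg (hK : IsBodyOfConstantWidthOne K) (u : EuclideanSpace ℝ (Fin 3)) :
    suppFn K u + suppFn K (-u) = ‖u‖ :=
  hK.2.2.2 u

theorem closedBall_one_sub_subset (hK : IsBodyOfConstantWidthOne K) (h : K ⊆ closedBall a r) :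
    closedBall a (1 - r) ⊆ K := by
  obtain ⟨hne, hcompact, hconvex, hwidth⟩ := hK
  intro z hz
  by_contra hzK
  obtain ⟨f, c, hfK, hfz⟩ := geometric_hahn_banach_closed_point hconvex hcompact.isClosed hzK
  set u := (InnerProductSpace.toDual ℝ _).symm f
  have hf : ∀ y, f y = ⟪y, u⟫ := fun y => by
    rw [real_inner_comm]; exact InnerProductSpace.toDual_symm_apply.symm
  have h₁ : suppFn K u ≤ c := suppFn_le_of_forall_inner_le hne fun x hx => (hf x ▸ hfK x hx).le
  have h₂ := suppFn_le_of_subset_closedBall hne h (u := -u)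
  have h₃ := inner_le_of_mem_closedBall hz u
  rw [inner_neg_right, norm_neg] at h₂
  linarith [hwidth u, hf z ▸ hfz]

theorem subset_closedBall_one_sub (hK : IsBodyOfConstantWidthOne K) (hr : 0 ≤ r)
    (h : closedBall a r ⊆ K) : K ⊆ closedBall a (1 - r) := by
  intro x hx
  rw [mem_closedBall_iff_norm]
  refine norm_le_of_forall_inner_le fun u => ?_
  have h₁ := hK.isCompact.inner_le_suppFn hx u
  have h₂ := hK.isCompact.le_suppFn_of_closedBall_subset hr h (u := -u)
  rw [inner_neg_right, norm_neg] at h₂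
  rw [inner_sub_left]
  linarith [hK.suppFn_add_suppFn_neg u]

theorem circumradius_le_one (hK : IsBodyOfConstantWidthOne K) : circumradius K ≤ 1 := by
  obtain ⟨x₀, hx₀⟩ := hK.nonempty
  have hpoint : closedBall x₀ 0 ⊆ K := by rwa [closedBall_zero, Set.singleton_subset_iff]
  exact circumradius_le zero_le_one (by simpa using hK.subset_closedBall_one_sub le_rfl hpoint)

theorem inradius_eq_one_sub_circumradius (hK : IsBodyOfConstantWidthOne K) :
    inradius K = 1 - circumradius K := by
  set inRadii := {r : ℝ | 0 ≤ r ∧ ∃ a, closedBall a r ⊆ K}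
  obtain ⟨a, ha⟩ := exists_subset_closedBall_circumradius hK.nonempty hK.isCompact.isBounded
  have hmem : 1 - circumradius K ∈ inRadii :=
    ⟨sub_nonneg.2 hK.circumradius_le_one, a, hK.closedBall_one_sub_subset ha⟩
  have hub : ∀ r ∈ inRadii, r ≤ 1 - circumradius K := by
    rintro r ⟨hr, b, hb⟩
    have hKb := hK.subset_closedBall_one_sub hr hb
    linarith [circumradius_le (nonempty_closedBall.1 (hK.nonempty.mono hKb)) hKb]
  exact le_antisymm (csSup_le ⟨_, hmem⟩ hub) (le_csSup ⟨_, hub⟩ hmem)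

end IsBodyOfConstantWidthOne

theorem inradius_add_circumradius_eq_one_and_concentric
    (K : Set (EuclideanSpace ℝ (Fin 3))) (hK : IsBodyOfConstantWidthOne K) :
    inradius K + circumradius K = 1 ∧
    ∃ a : EuclideanSpace ℝ (Fin 3),
      closedBall a (inradius K) ⊆ K ∧ K ⊆ closedBall a (circumradius K) := by
  obtain ⟨a, ha⟩ := exists_subset_closedBall_circumradius hK.nonempty hK.isCompact.isBounded
  rw [hK.inradius_eq_one_sub_circumradius]
  exact ⟨sub_add_cancel 1 _, a, hK.closedBall_one_sub_subset ha, ha⟩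
end
end

section
/- Let K ⊆ ℝ³ be a body of constant width one with support function H_K, and let a ∈ ℝ³ be the center of the circumball of K (so K ⊆ closedBall(a, R(K))). Then: (i) |H_K(u) − 1/2 − ⟨a, u⟩| ≤ √(3/8) − 1/2 for every unit vector u; and (ii) |H_K(u) − H_K(v) − ⟨a, u − v⟩| ≤ ‖u − v‖ for all u, v ∈ ℝ³. -/
set_option maxHeartbeats 1000000

open MeasureTheory Metric Filter
open scoped RealInnerProductSpace

noncomputable section

local notation "E3" => EuclideanSpace ℝ (Fin 3)

lemma jung_combo {ι : Type} [Fintype ι] (R : ℝ) (hcard : Fintype.card ι ≤ 4)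
    (y : ι → E3) (wt : ι → ℝ) (hwnn : ∀ i, 0 ≤ wt i) (hwsum : ∑ i, wt i = 1)
    (hzR : ∀ i, ‖y i‖ = R) (hd : ∀ i j, ‖y i - y j‖ ≤ 1)
    (c : E3) (hsumy : ∑ i, wt i • y i = c) :
    2 * R ^ 2 ≤ 3 / 4 + 2 * ‖c‖ ^ 2 := by
  classical
  have cross : ∑ i, ∑ j, wt i * wt j * ⟪y i, y j⟫ = ‖c‖ ^ 2 := by
    have h1 : ⟪∑ i, wt i • y i, ∑ j, wt j • y j⟫
        = ∑ i, ∑ j, wt i * wt j * ⟪y i, y j⟫ := by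
      rw [sum_inner]
      refine Finset.sum_congr rfl (fun i _ => ?_)
      rw [inner_sum]
      refine Finset.sum_congr rfl (fun j _ => ?_)
      rw [real_inner_smul_left, real_inner_smul_right]
      ring
    rw [← h1, hsumy, real_inner_self_eq_norm_sq]
  have hA : ∑ i, ∑ j, wt i * wt j * R ^ 2 = R ^ 2 := by
    have h1 : ∀ i, ∑ j, wt i * wt j * R ^ 2 = wt i * R ^ 2 := by
      intro i
      calc ∑ j, wt i * wt j * R ^ 2 = ∑ j, wt i * R ^ 2 * wt j :=
            Finset.sum_congr rfl (fun j _ => by ring)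
        _ = wt i * R ^ 2 * ∑ j, wt j := by rw [Finset.mul_sum]
        _ = wt i * R ^ 2 := by rw [hwsum, mul_one]
    calc ∑ i, ∑ j, wt i * wt j * R ^ 2 = ∑ i, wt i * R ^ 2 :=
          Finset.sum_congr rfl (fun i _ => h1 i)
      _ = (∑ i, wt i) * R ^ 2 := by rw [Finset.sum_mul]
      _ = R ^ 2 := by rw [hwsum, one_mul]
  have main : ∑ i, ∑ j, wt i * wt j * ‖y i - y j‖ ^ 2 = 2 * R ^ 2 - 2 * ‖c‖ ^ 2 := by
    have hterm : ∀ i j, wt i * wt j * ‖y i - y j‖ ^ 2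
        = wt i * wt j * R ^ 2 + wt i * wt j * R ^ 2 - 2 * (wt i * wt j * ⟪y i, y j⟫) := by
      intro i j
      rw [norm_sub_sq_real, hzR, hzR]
      ring
    calc ∑ i, ∑ j, wt i * wt j * ‖y i - y j‖ ^ 2
        = ∑ i, ∑ j, (wt i * wt j * R ^ 2 + wt i * wt j * R ^ 2
            - 2 * (wt i * wt j * ⟪y i, y j⟫)) :=
          Finset.sum_congr rfl (fun i _ => Finset.sum_congr rfl (fun j _ => hterm i j))
      _ = (∑ i, ∑ j, wt i * wt j * R ^ 2) + (∑ i, ∑ j, wt i * wt j * R ^ 2)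
            - 2 * (∑ i, ∑ j, wt i * wt j * ⟪y i, y j⟫) := by
          simp only [Finset.sum_add_distrib, Finset.sum_sub_distrib, Finset.mul_sum]
      _ = 2 * R ^ 2 - 2 * ‖c‖ ^ 2 := by rw [hA, cross]; ring
  have hB : ∑ i, ∑ j, wt i * wt j = 1 := by
    have h1 : ∀ i, ∑ j, wt i * wt j = wt i := by
      intro i
      rw [← Finset.mul_sum, hwsum, mul_one]
    calc ∑ i, ∑ j, wt i * wt j = ∑ i, wt i :=
          Finset.sum_congr rfl (fun i _ => h1 i)
      _ = 1 := hwsum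
  have upper : ∑ i, ∑ j, wt i * wt j * ‖y i - y j‖ ^ 2 ≤ 1 - ∑ i, wt i ^ 2 := by
    have hterm : ∀ i j, wt i * wt j * ‖y i - y j‖ ^ 2
        ≤ wt i * wt j - (if i = j then wt i * wt j else 0) := by
      intro i j
      by_cases h : i = j
      · subst h
        simp
      · simp only [h, if_false, sub_zero]
        have h1 : ‖y i - y j‖ ^ 2 ≤ 1 := by nlinarith [norm_nonneg (y i - y j), hd i j]
        calc wt i * wt j * ‖y i - y j‖ ^ 2 ≤ wt i * wt j * 1 :=
              mul_le_mul_of_nonneg_left h1 (mul_nonneg (hwnn i) (hwnn j))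
          _ = wt i * wt j := mul_one _
    calc ∑ i, ∑ j, wt i * wt j * ‖y i - y j‖ ^ 2
        ≤ ∑ i, ∑ j, (wt i * wt j - if i = j then wt i * wt j else 0) :=
          Finset.sum_le_sum (fun i _ => Finset.sum_le_sum (fun j _ => hterm i j))
      _ = (∑ i, ∑ j, wt i * wt j) - ∑ i, ∑ j, (if i = j then wt i * wt j else 0) := by
          simp only [Finset.sum_sub_distrib]
      _ = 1 - ∑ i, wt i ^ 2 := by
          rw [hB]
          congr 1
          refine Finset.sum_congr rfl (fun i _ => ?_)
          rw [Finset.sum_ite_eq (Finset.univ) i (fun j => wt i * wt j)]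
          simp [sq]
  have hsq : 1 ≤ 4 * ∑ i, wt i ^ 2 := by
    have h1 := sq_sum_le_card_mul_sum_sq (s := (Finset.univ : Finset ι)) (f := wt)
    rw [hwsum] at h1
    have hc4 : ((Finset.univ : Finset ι).card : ℝ) ≤ 4 := by
      rw [Finset.card_univ]
      exact_mod_cast hcard
    have hs0 : 0 ≤ ∑ i, wt i ^ 2 := Finset.sum_nonneg (fun i _ => sq_nonneg _)
    nlinarith
  nlinarith

lemma jung_aux {K : Set E3} (hne : K.Nonempty) (hc : IsCompact K)
    (hdiam : ∀ x ∈ K, ∀ y ∈ K, ‖x - y‖ ≤ 1)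
    (a : E3) (ha : K ⊆ closedBall a (circumradius K)) :
    circumradius K ≤ Real.sqrt (3 / 8) := by
  classical
  set R := circumradius K with hRdef
  have hset : ∀ r : ℝ, 0 ≤ r → ∀ b : E3, K ⊆ closedBall b r → R ≤ r := by
    intro r hr b hb
    exact csInf_le ⟨0, fun s hs => hs.1⟩ ⟨hr, b, hb⟩
  have hR0 : 0 ≤ R := Real.sInf_nonneg (fun r hr => hr.1)
  have hdist : ∀ x ∈ K, dist x a ≤ R := fun x hx => mem_closedBall.1 (ha hx)
  set S : Set E3 := {x ∈ K | dist x a = R} with hSdef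
  have hacl : a ∈ closure (convexHull ℝ S) := by
    by_contra hnot
    rcases S.eq_empty_or_nonempty with hSe | ⟨x₀, hx₀⟩
    · obtain ⟨x₀, hx₀K, hmax⟩ := hc.exists_isMaxOn hne
        ((continuous_id.dist continuous_const).continuousOn)
      have h1 : R ≤ dist x₀ a :=
        hset _ dist_nonneg _ (fun y hy => mem_closedBall.2 (isMaxOn_iff.1 hmax y hy))
      have h2 : dist x₀ a < R := lt_of_le_of_ne (hdist _ hx₀K)
        (fun h => Set.eq_empty_iff_forall_notMem.1 hSe x₀ ⟨hx₀K, h⟩)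
      linarith
    · obtain ⟨f, u, hfu, hua⟩ := geometric_hahn_banach_closed_point
        ((convex_convexHull ℝ S).closure) isClosed_closure hnot
      have hS : ∀ x ∈ S, f x < u := fun x hx =>
        hfu x (subset_closure (subset_convexHull ℝ S hx))
      set v : E3 := (InnerProductSpace.toDual ℝ (EuclideanSpace ℝ (Fin 3))).symm f with hv
      have hfv : ∀ y : E3, ⟪v, y⟫ = f y := fun y =>
        InnerProductSpace.toDual_symm_apply
      have hv0 : v ≠ 0 := by
        intro h
        have h1 : f x₀ < u := hS x₀ hx₀
        have h2 : (0:ℝ) = f x₀ := by rw [← hfv x₀, h, inner_zero_left]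
        have h3 : (0:ℝ) = f a := by rw [← hfv a, h, inner_zero_left]
        linarith
      have hvn : 0 < ‖v‖ := norm_pos_iff.2 hv0
      set w : E3 := ‖v‖⁻¹ • v with hw
      have hw1 : ‖w‖ = 1 := norm_smul_inv_norm hv0
      set δ : ℝ := (f a - u) / ‖v‖ with hδdef
      have hδ : 0 < δ := div_pos (by linarith) hvn
      have hSw : ∀ x ∈ S, ⟪w, x - a⟫ ≤ -δ := by
        intro x hx
        have h1 : ⟪w, x - a⟫ = ‖v‖⁻¹ * (f x - f a) := by
          rw [hw, real_inner_smul_left, inner_sub_right, hfv, hfv]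
        rw [h1, hδdef, div_eq_inv_mul]
        have h2 : f x - f a ≤ -(f a - u) := by linarith [hS x hx]
        calc ‖v‖⁻¹ * (f x - f a) ≤ ‖v‖⁻¹ * (-(f a - u)) :=
              mul_le_mul_of_nonneg_left h2 (by positivity)
          _ = -(‖v‖⁻¹ * (f a - u)) := by ring
      set C : Set E3 := K ∩ {x | -(δ/2) ≤ ⟪w, x - a⟫} with hCdef
      have hCc : IsCompact C := hc.inter_right
        (isClosed_le continuous_const (Continuous.inner continuous_const
          (continuous_id.sub continuous_const)))
      have hRpos : 0 < R := by
        have h1 := hSw x₀ hx₀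
        have h2 : x₀ ≠ a := by
          intro h
          rw [h, sub_self, inner_zero_right] at h1
          linarith
        have h3 : dist x₀ a = R := hx₀.2
        rw [← h3]
        exact dist_pos.2 h2
      obtain ⟨R', hR'0, hR'lt, hR'b⟩ :
          ∃ R', 0 ≤ R' ∧ R' < R ∧ ∀ x ∈ C, dist x a ≤ R' := by
        rcases C.eq_empty_or_nonempty with hCe | hCne
        · exact ⟨0, le_refl 0, hRpos, fun x hx => absurd (hCe ▸ hx) (Set.notMem_empty x)⟩
        · obtain ⟨x₁, hx₁C, hmax⟩ := hCc.exists_isMaxOn hCne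
            ((continuous_id.dist continuous_const).continuousOn)
          refine ⟨dist x₁ a, dist_nonneg, ?_, isMaxOn_iff.1 hmax⟩
          refine lt_of_le_of_ne (hdist _ hx₁C.1) (fun h => ?_)
          have h1 := hSw x₁ ⟨hx₁C.1, h⟩
          have h2 : -(δ/2) ≤ ⟪w, x₁ - a⟫ := hx₁C.2
          linarith
      set ε : ℝ := min (δ/2) ((R - R')/2) with hεdef
      have hε : 0 < ε := lt_min (by linarith) (by linarith)
      have hεδ : ε ≤ δ/2 := min_le_left _ _
      have hεR : ε ≤ (R - R')/2 := min_le_right _ _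
      set r' : ℝ := max (R' + ε) (Real.sqrt (R^2 - ε*δ/2)) with hr'def
      have claim : ∀ x ∈ K, dist x (a - ε • w) ≤ r' := by
        intro x hx
        by_cases hxC : x ∈ C
        · refine le_trans ?_ (le_max_left _ _)
          have h1 : dist x (a - ε • w) ≤ dist x a + dist a (a - ε • w) := dist_triangle _ _ _
          have h2 : dist a (a - ε • w) = ε := by
            rw [dist_eq_norm]
            have h3 : a - (a - ε • w) = ε • w := by abel
            rw [h3, norm_smul, hw1, Real.norm_eq_abs, abs_of_pos hε, mul_one]
          have h4 := hR'b x hxC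
          linarith
        · refine le_trans ?_ (le_max_right _ _)
          have hxw : ⟪w, x - a⟫ < -(δ/2) := by
            by_contra h
            push_neg at h
            exact hxC ⟨hx, h⟩
          have hd2 : dist x (a - ε • w) ^ 2 ≤ R^2 - ε*δ/2 := by
            rw [dist_eq_norm]
            have he : x - (a - ε • w) = (x - a) + ε • w := by abel
            rw [he, norm_add_sq_real]
            have h1 : ⟪x - a, ε • w⟫ = ε * ⟪w, x - a⟫ := by
              rw [real_inner_smul_right, real_inner_comm]
            have h2 : ‖ε • w‖^2 = ε^2 := by
              rw [norm_smul, hw1, Real.norm_eq_abs, abs_of_pos hε, mul_one]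
            have h3 : ‖x - a‖^2 ≤ R^2 := by
              have h4 := hdist x hx
              rw [dist_eq_norm] at h4
              nlinarith [norm_nonneg (x - a)]
            rw [h1, h2]
            nlinarith
          have h5 : dist x (a - ε • w) = Real.sqrt (dist x (a - ε • w) ^ 2) :=
            (Real.sqrt_sq dist_nonneg).symm
          rw [h5]
          exact Real.sqrt_le_sqrt hd2
      have hfin : R ≤ r' := by
        refine hset _ ?_ _ (fun x hx => mem_closedBall.2 (claim x hx))
        exact le_trans (by linarith) (le_max_left _ _)
      have hlt : r' < R := by
        apply max_lt (by linarith)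
        exact (Real.sqrt_lt' hRpos).2 (by nlinarith)
      linarith
  have hRR : 2 * R^2 ≤ 3/4 := by
    have key : ∀ ε : ℝ, 0 < ε → 2 * R^2 ≤ 3/4 + 2*ε^2 := by
      intro ε hε
      obtain ⟨b, hbS, hbd⟩ := Metric.mem_closure_iff.1 hacl ε hε
      obtain ⟨ι, hfin, z, wt, hzS, hai, hwpos, hwsum, hzsum⟩ :=
        eq_pos_convex_span_of_mem_convexHull hbS
      have hcard : Fintype.card ι ≤ 4 := by
        have h1 := @AffineIndependent.card_le_finrank_succ ℝ _ _ ι _ _ _ _ hfin z hai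
        have h2 : Module.finrank ℝ ↥(vectorSpan ℝ (Set.range z)) ≤ 3 := by
          have h3 := Submodule.finrank_le (vectorSpan ℝ (Set.range z))
          rwa [finrank_euclideanSpace_fin] at h3
        omega
      have hzK : ∀ i, z i ∈ K := fun i => (hzS (Set.mem_range_self i)).1
      have hzR : ∀ i, ‖z i - a‖ = R := by
        intro i
        have h := (hzS (Set.mem_range_self i)).2
        rwa [← dist_eq_norm]
      have hd : ∀ i j, ‖(z i - a) - (z j - a)‖ ≤ 1 := by
        intro i j
        have h : (z i - a) - (z j - a) = z i - z j := by abel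
        rw [h]
        exact hdiam _ (hzK i) _ (hzK j)
      have hsumy : ∑ i, wt i • (z i - a) = b - a := by
        simp only [smul_sub]
        rw [Finset.sum_sub_distrib, hzsum, ← Finset.sum_smul, hwsum, one_smul]
      have hcombo := @jung_combo ι hfin R hcard (fun i => z i - a) wt
        (fun i => (hwpos i).le) hwsum hzR hd (b - a) hsumy
      have hbd' : ‖b - a‖ < ε := by
        rw [← dist_eq_norm, dist_comm]
        exact hbd
      nlinarith [norm_nonneg (b - a)]
    refine le_of_forall_pos_le_add (fun ε hε => ?_)
    have h2 := key (Real.sqrt (ε/2)) (Real.sqrt_pos.2 (by linarith))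
    rw [Real.sq_sqrt (by linarith : (0:ℝ) ≤ ε/2)] at h2
    linarith
  exact (Real.le_sqrt hR0 (by norm_num)).2 (by linarith)

lemma le_suppFn {K : Set E3} (hc : IsCompact K) {x : E3} (hx : x ∈ K) (u : E3) :
    ⟪x, u⟫ ≤ suppFn K u :=
  le_csSup ((hc.image (continuous_id.inner continuous_const)).bddAbove) ⟨x, hx, rfl⟩

lemma suppFn_le {K : Set E3} (hne : K.Nonempty) {u : E3} {c : ℝ}
    (h : ∀ x ∈ K, ⟪x, u⟫ ≤ c) : suppFn K u ≤ c :=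
  csSup_le (hne.image _) (by rintro _ ⟨x, hx, rfl⟩; exact h x hx)

theorem suppFn_estimates_at_circumcenter
    (K : Set (EuclideanSpace ℝ (Fin 3))) (hK : IsBodyOfConstantWidthOne K)
    (a : EuclideanSpace ℝ (Fin 3)) (ha : K ⊆ closedBall a (circumradius K)) :
    (∀ u : EuclideanSpace ℝ (Fin 3), ‖u‖ = 1 →
        |suppFn K u - 1 / 2 - ⟪a, u⟫| ≤ Real.sqrt (3 / 8) - 1 / 2) ∧
    ∀ u v : EuclideanSpace ℝ (Fin 3),
      |suppFn K u - suppFn K v - ⟪a, u - v⟫| ≤ ‖u - v‖ := by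
  obtain ⟨hne, hc, hconv, hwidth⟩ := hK
  have hdiam : ∀ x ∈ K, ∀ y ∈ K, ‖x - y‖ ≤ 1 := by
    intro x hx y hy
    have h1 : ⟪x, x - y⟫ ≤ suppFn K (x - y) := le_suppFn hc hx _
    have h2 : ⟪y, -(x - y)⟫ ≤ suppFn K (-(x - y)) := le_suppFn hc hy _
    have h3 := hwidth (x - y)
    have h4 : ⟪x, x - y⟫ + ⟪y, -(x - y)⟫ = ‖x - y‖ ^ 2 := by
      rw [inner_neg_right, ← sub_eq_add_neg, ← inner_sub_left, real_inner_self_eq_norm_sq]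
    nlinarith [norm_nonneg (x - y)]
  have hjung : circumradius K ≤ Real.sqrt (3 / 8) := jung_aux hne hc hdiam a ha
  set R := circumradius K with hRdef
  have hR0 : 0 ≤ R := Real.sInf_nonneg (fun r hr => hr.1)
  have hRle1 : R ≤ 1 := hjung.trans (Real.sqrt_le_one.2 (by norm_num))
  have hub : ∀ u : E3, suppFn K u ≤ ⟪a, u⟫ + R * ‖u‖ := by
    intro u
    refine suppFn_le hne (fun x hx => ?_)
    have h1 : ⟪x, u⟫ = ⟪a, u⟫ + ⟪x - a, u⟫ := by
      rw [inner_sub_left]; ring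
    have h2 : ⟪x - a, u⟫ ≤ ‖x - a‖ * ‖u‖ := real_inner_le_norm _ _
    have h3 : ‖x - a‖ ≤ R := by
      have := ha hx
      rwa [mem_closedBall, dist_eq_norm] at this
    have h4 : ‖x - a‖ * ‖u‖ ≤ R * ‖u‖ :=
      mul_le_mul_of_nonneg_right h3 (norm_nonneg u)
    linarith
  constructor
  · intro u hu
    have h1 : suppFn K u ≤ ⟪a, u⟫ + R := by
      have := hub u; rw [hu, mul_one] at this; exact this
    have h2 : suppFn K (-u) ≤ -⟪a, u⟫ + R := by
      have := hub (-u)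
      rw [norm_neg, hu, mul_one, inner_neg_right] at this
      exact this
    have h3 := hwidth u
    rw [hu] at h3
    have hs38 : Real.sqrt (3 / 8) ≤ 1 := Real.sqrt_le_one.2 (by norm_num)
    rw [abs_le]
    constructor <;> nlinarith [hjung]
  · intro u v
    have hsub : ∀ p q : E3, suppFn K p ≤ suppFn K q + suppFn K (p - q) := by
      intro p q
      refine suppFn_le hne (fun x hx => ?_)
      have h1 : ⟪x, p⟫ = ⟪x, q⟫ + ⟪x, p - q⟫ := by
        rw [inner_sub_right]; ring
      linarith [le_suppFn hc hx q, le_suppFn hc hx (p - q)]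
    have h1 : suppFn K u - suppFn K v ≤ ⟪a, u - v⟫ + ‖u - v‖ := by
      have h2 := hub (u - v)
      have h3 : R * ‖u - v‖ ≤ 1 * ‖u - v‖ :=
        mul_le_mul_of_nonneg_right hRle1 (norm_nonneg _)
      have h4 := hsub u v
      linarith [h2, h4]
    have h1' : suppFn K v - suppFn K u ≤ -⟪a, u - v⟫ + ‖u - v‖ := by
      have h2 := hub (v - u)
      have h3 : R * ‖u - v‖ ≤ 1 * ‖u - v‖ :=
        mul_le_mul_of_nonneg_right hRle1 (norm_nonneg _)
      have h4 := hsub v u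
      have h5 : ⟪a, v - u⟫ = -⟪a, u - v⟫ := by
        rw [← inner_neg_right]
        congr 1
        abel
      have h6 : ‖v - u‖ = ‖u - v‖ := norm_sub_rev _ _
      rw [h5, h6] at h2
      linarith [h2, h4]
    rw [abs_le]
    constructor <;> linarith
end
end

section
/- Let K ⊆ ℝ³ be a body of constant width one with support function H_K, let u ∈ ℝ³ \ {0}, and suppose H_K is twice differentiable (in the Fréchet sense) at both u and −u. Then for every unit vector w ∈ ℝ³, 0 ≤ D²H_K(u)(w, w) ≤ 1/‖u‖. -/
open MeasureTheory Metric Filter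
open scoped RealInnerProductSpace

noncomputable section

/-!
The support function `H = suppFn K` is a supremum of linear functionals, hence convex, so
`D²H(u)(w, w) ≥ 0` and `D²H(-u)(-w, -w) ≥ 0`. Constant width gives
`H(u + s • w) + H(-u - s • w) = ‖u + s • w‖`, so these two second derivatives add up to the second
derivative at `s = 0` of `φ s = ‖u + s • w‖`. Differentiating `φ² = ‖u‖² + 2⟪u, w⟫ s + ‖w‖² s²`
twice gives `‖u‖ φ''(0) = ‖w‖² - φ'(0)² ≤ 1`.
-/

open Set Topology

lemma suppFn_convexOn {K : Set (EuclideanSpace ℝ (Fin 3))} (hne : K.Nonempty)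
    (hbdd : Bornology.IsBounded K) : ConvexOn ℝ univ (suppFn K) := by
  have hbddAbove (v : EuclideanSpace ℝ (Fin 3)) : BddAbove ((fun x => ⟪x, v⟫) '' K) := by
    simpa [real_inner_comm] using ((innerSL ℝ v).lipschitz.isBounded_image hbdd).bddAbove
  refine ⟨convex_univ, fun x _ y _ a b ha hb _ => csSup_le (hne.image _) ?_⟩
  rintro _ ⟨z, hz, rfl⟩
  simp only [inner_add_right, real_inner_smul_right, smul_eq_mul]
  gcongr
  · exact le_csSup (hbddAbove x) ⟨z, hz, rfl⟩
  · exact le_csSup (hbddAbove y) ⟨z, hz, rfl⟩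

lemma ConvexOn.nonneg_of_hasDerivAt_of_eventually_hasDerivAt {S : Set ℝ} {f f' : ℝ → ℝ}
    {x a : ℝ} (hf : ConvexOn ℝ S f) (hS : S ∈ 𝓝 x)
    (hf' : ∀ᶠ y in 𝓝 x, HasDerivAt f (f' y) y) (ha : HasDerivAt f' a x) : 0 ≤ a := by
  obtain ⟨ε, hε, hball⟩ := Metric.mem_nhds_iff.mp (inter_mem hS hf')
  have hmono : MonotoneOn f' (ball x ε) := by
    intro y hy z hz hyz
    rcases hyz.eq_or_lt with rfl | hlt
    · rfl
    exact (hf.le_slope_of_hasDerivAt (hball hy).1 (hball hz).1 hlt (hball hy).2).trans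
      (hf.slope_le_of_hasDerivAt (hball hy).1 (hball hz).1 hlt (hball hz).2)
  have hacc : AccPt x (𝓟 (ball x ε)) := by
    simpa using (PerfectSpace.univ_preperfect x (mem_univ x)).nhds_inter (ball_mem_nhds x hε)
  exact ha.hasDerivWithinAt.nonneg_of_monotoneOn hacc hmono

section LineRestriction

variable {E F : Type*} [NormedAddCommGroup E] [NormedSpace ℝ E]
  [NormedAddCommGroup F] [NormedSpace ℝ F]

lemma hasDerivAt_add_smul (u w : E) (s : ℝ) : HasDerivAt (fun s : ℝ => u + s • w) w s := by
  simpa using ((hasDerivAt_id s).smul_const w).const_add u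

lemma eventually_hasDerivAt_comp_add_smul {f : E → F} {u : E}
    (hf : ∀ᶠ y in 𝓝 u, DifferentiableAt ℝ f y) (w : E) :
    ∀ᶠ s in 𝓝 (0 : ℝ), HasDerivAt (fun s : ℝ => f (u + s • w)) (fderiv ℝ f (u + s • w) w) s := by
  have hline : Tendsto (fun s : ℝ => u + s • w) (𝓝 0) (𝓝 u) := by
    simpa using (hasDerivAt_add_smul u w 0).continuousAt.tendsto
  filter_upwards [hline.eventually hf] with s hs
  exact hs.hasFDerivAt.comp_hasDerivAt s (hasDerivAt_add_smul u w s)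

lemma hasDerivAt_apply_comp_add_smul {g : E → E →L[ℝ] F} {u : E} (hg : DifferentiableAt ℝ g u)
    (w : E) : HasDerivAt (fun s : ℝ => g (u + s • w) w) (fderiv ℝ g u w w) 0 := by
  have hcomp : HasDerivAt (fun s : ℝ => g (u + s • w)) (fderiv ℝ g u w) 0 := by
    have hg' : HasFDerivAt g (fderiv ℝ g u) (u + (0 : ℝ) • w) := by simpa using hg.hasFDerivAt
    exact hg'.comp_hasDerivAt 0 (hasDerivAt_add_smul u w 0)
  simpa using hcomp.clm_apply (hasDerivAt_const (0 : ℝ) w)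

lemma ConvexOn.fderiv_fderiv_apply_self_nonneg {S : Set E} {f : E → ℝ} {u : E}
    (hf : ConvexOn ℝ S f) (hS : S ∈ 𝓝 u) (h₁ : ∀ᶠ y in 𝓝 u, DifferentiableAt ℝ f y) (h₂ : DifferentiableAt ℝ (fderiv ℝ f) u)
    (w : E) : 0 ≤ fderiv ℝ (fderiv ℝ f) u w w := by
  let line : ℝ →ᵃ[ℝ] E := AffineMap.lineMap u (u + w)
  have hline (s : ℝ) : line s = u + s • w := by
    simp [line, AffineMap.lineMap_apply, add_comm]
  have hconv : ConvexOn ℝ (line ⁻¹' S) (fun s : ℝ => f (u + s • w)) := by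
    simpa only [Function.comp_def, hline] using hf.comp_affineMap line
  have hS' : line ⁻¹' S ∈ 𝓝 (0 : ℝ) :=
    line.continuous_of_finiteDimensional.continuousAt.preimage_mem_nhds (by simpa [hline] using hS)
  exact hconv.nonneg_of_hasDerivAt_of_eventually_hasDerivAt hS'
    (eventually_hasDerivAt_comp_add_smul h₁ w) (hasDerivAt_apply_comp_add_smul h₂ w)

end LineRestriction

lemma norm_mul_le_norm_sq_of_hasDerivAt_norm_add_smul {E : Type*} [NormedAddCommGroup E]
    [InnerProductSpace ℝ E] {u w : E} {φ' : ℝ → ℝ} {a : ℝ}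
    (hφ : ∀ᶠ s in 𝓝 (0 : ℝ), HasDerivAt (fun s : ℝ => ‖u + s • w‖) (φ' s) s)
    (ha : HasDerivAt φ' a 0) : ‖u‖ * a ≤ ‖w‖ ^ 2 := by
  have hsq (s : ℝ) : ‖u + s • w‖ ^ 2 = ‖u‖ ^ 2 + 2 * ⟪u, w⟫ * s + ‖w‖ ^ 2 * s ^ 2 := by
    rw [norm_add_sq_real, norm_smul, real_inner_smul_right, mul_pow, Real.norm_eq_abs, sq_abs]
    ring
  have hquad (s : ℝ) : HasDerivAt (fun s : ℝ => ‖u + s • w‖ ^ 2)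
      (2 * ⟪u, w⟫ + ‖w‖ ^ 2 * (2 * s)) s := by
    simp only [hsq]
    simpa using (((hasDerivAt_id s).const_mul (2 * ⟪u, w⟫)).const_add (‖u‖ ^ 2)).fun_add
      ((hasDerivAt_pow 2 s).const_mul (‖w‖ ^ 2))
  have hprod : (fun s : ℝ => ‖u + s • w‖ * φ' s) =ᶠ[𝓝 0] fun s => ⟪u, w⟫ + ‖w‖ ^ 2 * s := by
    filter_upwards [hφ] with s hs
    have hderiv_sq := (hs.pow 2).unique (hquad s)
    norm_num at hderiv_sq
    linarith
  have hlin : HasDerivAt (fun s : ℝ => ⟪u, w⟫ + ‖w‖ ^ 2 * s) (‖w‖ ^ 2) 0 := by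
    simpa using ((hasDerivAt_id (0 : ℝ)).const_mul (‖w‖ ^ 2)).const_add ⟪u, w⟫
  have hderiv_prod := (hφ.self_of_nhds.mul ha).unique (hlin.congr_of_eventuallyEq hprod)
  simp only [zero_smul, add_zero] at hderiv_prod
  nlinarith [sq_nonneg (φ' 0)]

theorem second_deriv_suppFn_bounds
    (K : Set (EuclideanSpace ℝ (Fin 3))) (hK : IsBodyOfConstantWidthOne K)
    (u : EuclideanSpace ℝ (Fin 3)) (hu : u ≠ 0)
    (h₁ : ∀ᶠ y in nhds u, DifferentiableAt ℝ (suppFn K) y)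
    (h₂ : DifferentiableAt ℝ (fderiv ℝ (suppFn K)) u)
    (h₃ : ∀ᶠ y in nhds (-u), DifferentiableAt ℝ (suppFn K) y)
    (h₄ : DifferentiableAt ℝ (fderiv ℝ (suppFn K)) (-u))
    (w : EuclideanSpace ℝ (Fin 3)) (hw : ‖w‖ = 1) :
    0 ≤ fderiv ℝ (fderiv ℝ (suppFn K)) u w w ∧
      fderiv ℝ (fderiv ℝ (suppFn K)) u w w ≤ 1 / ‖u‖ := by
  obtain ⟨hne, hcpt, -, hwidth⟩ := hK
  have hconv := suppFn_convexOn hne hcpt.isBounded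
  have hA := hconv.fderiv_fderiv_apply_self_nonneg univ_mem h₁ h₂ w
  have hB := hconv.fderiv_fderiv_apply_self_nonneg univ_mem h₃ h₄ (-w)
  have hwidth_line (s : ℝ) : suppFn K (u + s • w) + suppFn K (-u + s • -w) = ‖u + s • w‖ := by
    rw [← hwidth, neg_add, smul_neg]
  have hderiv : ∀ᶠ s in 𝓝 (0 : ℝ), HasDerivAt (fun s : ℝ => ‖u + s • w‖)
      (fderiv ℝ (suppFn K) (u + s • w) w + fderiv ℝ (suppFn K) (-u + s • -w) (-w)) s := by
    filter_upwards [eventually_hasDerivAt_comp_add_smul h₁ w,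
      eventually_hasDerivAt_comp_add_smul h₃ (-w)] with s hg hh
    simpa only [hwidth_line] using hg.fun_add hh
  have hnorm := norm_mul_le_norm_sq_of_hasDerivAt_norm_add_smul hderiv
    ((hasDerivAt_apply_comp_add_smul h₂ w).fun_add (hasDerivAt_apply_comp_add_smul h₄ (-w)))
  rw [hw, one_pow] at hnorm
  refine ⟨hA, ?_⟩
  rw [le_div_iff₀ (norm_pos_iff.mpr hu)]
  nlinarith [mul_nonneg (norm_nonneg u) hB]
end
end

section
/- Let f : [0, ∞) → ℝ be locally integrable and suppose that for almost every pair (s, t) with 0 ≤ s ≤ t < ∞ (with respect to two-dimensional Lebesgue measure on {(s,t) : 0 ≤ s ≤ t}), one has ∫_s^t f(τ) dτ ≤ (t − s)·f(s). Then f is essentially nonincreasing: there exists a Lebesgue-null set N ⊆ [0, ∞) such that f(t) ≤ f(s) for all s ≤ t with s, t ∉ N. -/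
/-!
Fix a point `s` at which the hypothesis holds for every `t ≥ s` (almost every `s`, by Fubini and
continuity in `t`), and a later endpoint `b`. Then `F x = ∫_x^b (f - f s)` satisfies `F s ≤ 0`,
and wherever `F x > 0` the hypothesis at `x` forces `f x > f s`, so `F` cannot increase on a
stretch where it is positive; hence `F ≤ 0` on `[s, b]`, i.e. every average of `f` over an
interval `[x, b] ⊆ [s, b]` is at most `f s`. Letting `x ↑ b` at a Lebesgue point `b` gives
`f b ≤ f s`.
-/

open MeasureTheory intervalIntegral Set

theorem MeasureTheory.LocallyIntegrableOn.locallyIntegrable_indicator {X E : Type*}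
    [TopologicalSpace X] [MeasurableSpace X] [OpensMeasurableSpace X] [NormedAddCommGroup E]
    {μ : Measure X} {f : X → E} {s : Set X} (hf : LocallyIntegrableOn f s μ) (hs : IsClosed s) :
    LocallyIntegrable (s.indicator f) μ := fun x ↦ by
  obtain ⟨U, hU, hint⟩ := (locallyIntegrableOn_iff_locallyIntegrable_restrict hs).1 hf x
  refine ⟨U, hU, ?_⟩
  rw [IntegrableOn, integrable_indicator_iff hs.measurableSet, IntegrableOn,
    Measure.restrict_comm hs.measurableSet]
  exact hint

theorem MeasureTheory.LocallyIntegrable.intervalIntegrable {E : Type*} [NormedAddCommGroup E]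
    {g : ℝ → E} (hg : LocallyIntegrable g volume) (a b : ℝ) : IntervalIntegrable g volume a b :=
  (hg.integrableOn_isCompact isCompact_uIcc).intervalIntegrable

theorem le_on_closure_of_ae_le {X Y : Type*} [TopologicalSpace X] [MeasurableSpace X]
    {μ : Measure X} [μ.IsOpenPosMeasure] [TopologicalSpace Y] [Preorder Y]
    [OrderClosedTopology Y] {u v : X → Y} (hu : Continuous u) (hv : Continuous v) {U : Set X}
    (hU : IsOpen U) (h : ∀ᵐ x ∂μ, x ∈ U → u x ≤ v x) : ∀ x ∈ closure U, u x ≤ v x := by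
  have hclosed : IsClosed {x | u x ≤ v x} := isClosed_le hu hv
  have hdense : U ⊆ closure (U ∩ {x | x ∈ U → u x ≤ v x}) :=
    (Measure.dense_of_ae h).open_subset_closure_inter hU
  exact closure_minimal (hdense.trans (closure_minimal (fun x hx ↦ hx.2 hx.1) hclosed)) hclosed

theorem ContinuousOn.nonpos_of_le_of_forall_pos_Ioc {F : ℝ → ℝ} {a b : ℝ} (hab : a ≤ b)
    (hF : ContinuousOn F (Icc a b)) (ha : F a ≤ 0)
    (hstep : ∀ x y, a ≤ x → x < y → y ≤ b → (∀ z ∈ Ioc x y, 0 < F z) → F y ≤ F x) :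
    F b ≤ 0 := by
  by_contra! hb
  set E := Icc a b ∩ F ⁻¹' Iic 0
  have hE : IsCompact E :=
    isCompact_Icc.of_isClosed_subset (hF.preimage_isClosed_of_isClosed isClosed_Icc isClosed_Iic)
      inter_subset_left
  obtain ⟨x, ⟨⟨hax, hxb⟩, hFx⟩, hxmax⟩ := hE.exists_isGreatest ⟨a, ⟨le_rfl, hab⟩, ha⟩
  have hFx : F x ≤ 0 := hFx
  have hxb : x < b := hxb.lt_of_ne fun h ↦ by subst h; linarith
  have hpos : ∀ z ∈ Ioc x b, 0 < F z := fun z hz ↦ by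
    by_contra! hFz
    exact hz.1.not_ge (hxmax ⟨⟨hax.trans hz.1.le, hz.2⟩, hFz⟩)
  linarith [hstep x b hax hxb le_rfl hpos]

theorem integral_le_mul_of_ae_integral_le_mul {g : ℝ → ℝ} {s u b c : ℝ}
    (hg : IntervalIntegrable g volume s b) (hsu : s ≤ u) (hub : u ≤ b)
    (hs : ∫ τ in s..b, g τ ≤ (b - s) * c)
    (hae : ∀ᵐ x, x ∈ Ioo s b → ∫ τ in x..b, g τ ≤ (b - x) * g x) :
    ∫ τ in u..b, g τ ≤ (b - u) * c := by
  have hint : ∀ v ∈ Icc s b, ∀ w ∈ Icc s b, IntervalIntegrable g volume v w := by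
    rw [← uIcc_of_le (hsu.trans hub)]
    exact fun v hv w hw ↦ hg.mono_set (uIcc_subset_uIcc hv hw)
  set F : ℝ → ℝ := fun x ↦ (∫ τ in x..b, g τ) - (b - x) * c
  have hFb : F b = 0 := by simp [F]
  have hF : ContinuousOn F (Icc s u) := by
    have hsub : Icc s u ⊆ uIcc s b := by
      rw [uIcc_of_le (hsu.trans hub)]
      exact Icc_subset_Icc_right hub
    have hFeq : F = fun x ↦ -(∫ τ in b..x, g τ) - (b - x) * c := by
      ext x
      simp [F, integral_symm b x]
    rw [hFeq]
    exact ((continuousOn_primitive_interval' hg right_mem_uIcc).mono hsub).neg.sub (by fun_prop)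
  suffices F u ≤ 0 by linarith
  refine hF.nonpos_of_le_of_forall_pos_Ioc hsu (by linarith) fun x y hsx hxy hyu hpos ↦ ?_
  -- where `F z > 0`, the hypothesis at `z` reads `(b - z) * c < ∫_z^b g ≤ (b - z) * g z`
  have hcg : ∀ᵐ z, z ∈ Ioc x y → c ≤ g z := by
    filter_upwards [hae] with z hz hzxy
    have hFz := hpos z hzxy
    have hzb : z < b := (hzxy.2.trans hyu).trans hub |>.lt_of_ne fun h ↦ by
      rw [h, hFb] at hFz
      exact hFz.false
    exact (lt_of_mul_lt_mul_left (by linarith [hz ⟨hsx.trans_lt hzxy.1, hzb⟩])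
      (sub_nonneg.2 hzb.le)).le
  have hxsb : x ∈ Icc s b := ⟨hsx, by linarith⟩
  have hysb : y ∈ Icc s b := ⟨by linarith, by linarith⟩
  have hxy_int : ∫ τ in x..y, c ≤ ∫ τ in x..y, g τ := by
    rw [integral_of_le hxy.le, integral_of_le hxy.le]
    exact setIntegral_mono_ae_restrict (integrableOn_const measure_Ioc_lt_top.ne)
      (hint x hxsb y hysb).1 ((ae_restrict_iff' measurableSet_Ioc).2 hcg)
  have hsplit : ∫ τ in x..b, g τ = (∫ τ in x..y, g τ) + ∫ τ in y..b, g τ :=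
    (integral_add_adjacent_intervals (hint x hxsb y hysb)
      (hint y hysb b ⟨by linarith, le_rfl⟩)).symm
  simp only [F, hsplit, intervalIntegral.integral_const, smul_eq_mul] at hxy_int ⊢
  linarith

theorem ae_forall_integral_le_mul {g : ℝ → ℝ} {a : ℝ} (hg : LocallyIntegrable g volume)
    (h : ∀ᵐ p : ℝ × ℝ, a ≤ p.1 ∧ p.1 ≤ p.2 → ∫ τ in p.1..p.2, g τ ≤ (p.2 - p.1) * g p.1) :
    ∀ᵐ s, a ≤ s → ∀ t, s ≤ t → ∫ τ in s..t, g τ ≤ (t - s) * g s := by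
  rw [Measure.volume_eq_prod] at h
  filter_upwards [Measure.ae_ae_of_ae_prod h] with s hs has t hst
  refine le_on_closure_of_ae_le (continuous_primitive hg.intervalIntegrable s) (by fun_prop)
    isOpen_Ioi (hs.mono fun t ht hst ↦ ht ⟨has, le_of_lt hst⟩) t ?_
  rwa [closure_Ioi]

theorem le_of_integral_le_mul_of_hasDerivAt {g : ℝ → ℝ} {s t : ℝ}
    (hg : IntervalIntegrable g volume s t) (hst : s < t)
    (hs : ∫ τ in s..t, g τ ≤ (t - s) * g s)
    (hae : ∀ᵐ x, x ∈ Ioo s t → ∫ τ in x..t, g τ ≤ (t - x) * g x)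
    (ht : HasDerivAt (fun x ↦ ∫ τ in t..x, g τ) (g t) t) : g t ≤ g s := by
  refine le_of_tendsto (hasDerivAt_iff_tendsto_slope_left_right.1 ht).1 ?_
  filter_upwards [Ioo_mem_nhdsLT hst] with x hx
  have := integral_le_mul_of_ae_integral_le_mul hg hx.1.le hx.2.le hs hae
  rw [slope_def_field, integral_same, sub_zero, integral_symm,
    div_le_iff_of_neg (by linarith [hx.2])]
  linarith

theorem exists_null_forall_le_of_ae_integral_le_mul {g : ℝ → ℝ}
    (hg : LocallyIntegrable g volume) (a : ℝ)
    (h : ∀ᵐ p : ℝ × ℝ, a ≤ p.1 ∧ p.1 ≤ p.2 → ∫ τ in p.1..p.2, g τ ≤ (p.2 - p.1) * g p.1) :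
    ∃ N : Set ℝ, volume N = 0 ∧ ∀ s t : ℝ, a ≤ s → s ≤ t → s ∉ N → t ∉ N → g t ≤ g s := by
  have hgood := ae_forall_integral_le_mul hg h
  refine ⟨_, ae_iff.1 (hgood.and (LocallyIntegrable.ae_hasDerivAt_integral hg)),
    fun s t has hst hs ht ↦ ?_⟩
  simp only [mem_ofPred_eq, not_not] at hs ht
  obtain rfl | hst := hst.eq_or_lt
  · rfl
  refine le_of_integral_le_mul_of_hasDerivAt (hg.intervalIntegrable s t) hst
    (hs.1 has t hst.le) ?_ (ht.2 t)
  filter_upwards [hgood] with x hx hxst using hx (has.trans hxst.1.le) t hxst.2.le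

/-- If `f` is locally integrable on `[0,∞)` and `∫_s^t f ≤ (t - s) * f s` for almost every
pair `(s, t)` with `0 ≤ s ≤ t`, then `f` is essentially nonincreasing. -/
theorem essentially_nonincreasing_of_integral_condition (f : ℝ → ℝ)
    (hloc : LocallyIntegrableOn f (Set.Ici 0) volume)
    (h : ∀ᵐ p : ℝ × ℝ, (0 ≤ p.1 ∧ p.1 ≤ p.2) →
      (∫ τ in p.1..p.2, f τ) ≤ (p.2 - p.1) * f p.1) :
    ∃ N : Set ℝ, volume N = 0 ∧
      ∀ s t : ℝ, 0 ≤ s → s ≤ t → s ∉ N → t ∉ N → f t ≤ f s := by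
  set g := (Ici (0 : ℝ)).indicator f
  have hgf : EqOn g f (Ici 0) := fun x hx ↦ indicator_of_mem hx f
  have hg : ∀ᵐ p : ℝ × ℝ, 0 ≤ p.1 ∧ p.1 ≤ p.2 →
      ∫ τ in p.1..p.2, g τ ≤ (p.2 - p.1) * g p.1 := by
    filter_upwards [h] with p hp hp12
    have hint : ∫ τ in p.1..p.2, g τ = ∫ τ in p.1..p.2, f τ :=
      integral_congr fun x hx ↦ hgf (hp12.1.trans (uIcc_of_le hp12.2 ▸ hx).1)
    rw [hint, hgf hp12.1]
    exact hp hp12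
  obtain ⟨N, hN, hanti⟩ :=
    exists_null_forall_le_of_ae_integral_le_mul (hloc.locallyIntegrable_indicator isClosed_Ici) 0 hg
  refine ⟨N, hN, fun s t hs hst hsN htN ↦ ?_⟩
  rw [← hgf hs, ← hgf (hs.trans hst)]
  exact hanti s t hs hst hsN htN
end
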